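/- arXiv:1212.5901 — 6 statements merged into one kernel-verified Lean document; each statement's English description precedes it below -/
import Mathlib

section
/- Let R be a unital ring and A an ℕ×ℕ matrix over R such that N(A) := max(sup over rows of the number of nonzero entries, sup over columns of the number of nonzero entries) is finite. Then A can be written as a finite sum A = A₁ + ⋯ + A_k, where each A_l is a finite sum of products P A Q with P, Q in Karoubi's cone Γ(R), and each A_l has at most one nonzero entry in every row and every column. -/
open scoped BigOperators

/-- `N(A) < ∞`: there is a common finite bound on the number of nonzero entries
of every row and of every column of the `ℕ×ℕ` matrix `A`. -/
def NFin {R : Type*} [Ring R] (A : ℕ → ℕ → R) : Prop :=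
  ∃ N : ℕ,
    (∀ i, {j | A i j ≠ 0}.Finite ∧ {j | A i j ≠ 0}.ncard ≤ N) ∧
    (∀ j, {i | A i j ≠ 0}.Finite ∧ {i | A i j ≠ 0}.ncard ≤ N)

/-- Membership in Karoubi's cone `Γ(R)`: `N(A) < ∞` and the set of entries of
`A` is finite. -/
def InGamma {R : Type*} [Ring R] (A : ℕ → ℕ → R) : Prop :=
  NFin A ∧ (Set.range fun p : ℕ × ℕ => A p.1 p.2).Finite

/-- The (locally finite) product `P * A * Q` of `ℕ×ℕ` matrices, defined
entrywise by finite sums. -/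
noncomputable def mul3 {R : Type*} [Ring R] (P A Q : ℕ → ℕ → R) : ℕ → ℕ → R :=
  fun i j => ∑ᶠ (k : ℕ), ∑ᶠ (l : ℕ), P i k * A k l * Q l j

/-- `B ∈ Γ(R) A Γ(R)`: `B` is a finite sum of products `P A Q` with
`P, Q ∈ Γ(R)`. -/
def InGAG {R : Type*} [Ring R] (A B : ℕ → ℕ → R) : Prop :=
  ∃ (n : ℕ) (P Q : Fin n → (ℕ → ℕ → R)),
    (∀ t, InGamma (P t) ∧ InGamma (Q t)) ∧ B = ∑ t, mul3 (P t) A (Q t)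

/-! ### Auxiliary machinery: greedy graph coloring -/

open scoped Classical

/-- Greedy coloring: color `n` with the least color not used by smaller neighbors. -/
noncomputable def greedyCol (adj : ℕ → ℕ → Prop) : ℕ → ℕ
  | n =>
    Nat.find (p := fun x =>
        x ∉ ((Finset.range n).filter fun m => adj n m).attach.image
          (fun m => greedyCol adj m.1))
      (by
        set used := ((Finset.range n).filter fun m => adj n m).attach.image
          (fun m => greedyCol adj m.1) with hused
        exact ⟨used.sup id + 1, fun h => Nat.not_succ_le_self _ (Finset.le_sup (f := id) h)⟩)
  decreasing_by
    all_goals exact Finset.mem_range.mp (Finset.mem_filter.mp m.2).1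

lemma greedyCol_used (adj : ℕ → ℕ → Prop) (n : ℕ) :
    ((Finset.range n).filter fun m => adj n m).attach.image (fun m => greedyCol adj m.1)
      = ((Finset.range n).filter fun m => adj n m).image (greedyCol adj) := by
  ext x
  simp

lemma greedyCol_spec (adj : ℕ → ℕ → Prop) (n : ℕ) :
    greedyCol adj n ∉ ((Finset.range n).filter fun m => adj n m).image (greedyCol adj) := by
  rw [← greedyCol_used]
  rw [greedyCol]
  generalize_proofs h
  exact Nat.find_spec h

lemma greedyCol_ne (adj : ℕ → ℕ → Prop) {m n : ℕ} (hmn : m < n) (h : adj n m) :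
    greedyCol adj n ≠ greedyCol adj m := by
  intro hc
  exact greedyCol_spec adj n (hc ▸ Finset.mem_image_of_mem _
    (Finset.mem_filter.mpr ⟨Finset.mem_range.mpr hmn, h⟩))

lemma greedyCol_lt (adj : ℕ → ℕ → Prop) {k n : ℕ} (s : Finset ℕ)
    (hs : ∀ m, adj n m → m ∈ s) (hcard : s.card < k) :
    greedyCol adj n < k := by
  have hcard2 : (((Finset.range n).filter fun m => adj n m).image (greedyCol adj)).card < k := by
    have hsub : ((Finset.range n).filter fun m => adj n m).image (greedyCol adj)
        ⊆ s.image (greedyCol adj) :=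
      Finset.image_subset_image fun m hm => hs m (Finset.mem_filter.mp hm).2
    exact lt_of_le_of_lt (le_trans (Finset.card_le_card hsub) Finset.card_image_le) hcard
  have hex : ∃ x ∈ Finset.range k,
      x ∉ ((Finset.range n).filter fun m => adj n m).image (greedyCol adj) := by
    by_contra hall
    push_neg at hall
    have := Finset.card_le_card (fun x hx => hall x hx)
    simp only [Finset.card_range] at this
    omega
  obtain ⟨x, hxk, hx⟩ := hex
  have hle : greedyCol adj n ≤ x := by
    rw [← greedyCol_used] at hx
    rw [greedyCol]
    generalize_proofs h
    exact Nat.find_le hx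
  exact lt_of_le_of_lt hle (Finset.mem_range.mp hxk)

/-! ### Auxiliary machinery: diagonal idempotents and the conflict graph -/

/-- The diagonal 0/1 matrix supported on `U`. -/
noncomputable def diagM (R : Type*) [Ring R] (U : Set ℕ) : ℕ → ℕ → R :=
  fun i j => if i = j ∧ i ∈ U then 1 else 0

lemma diagM_ne {R : Type*} [Ring R] {U : Set ℕ} {i j : ℕ} (h : i ≠ j) :
    diagM R U i j = 0 := if_neg fun hc => h hc.1

lemma InGamma_diagM (R : Type*) [Ring R] (U : Set ℕ) : InGamma (diagM R U) := by
  constructor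
  · refine ⟨1, fun i => ?_, fun j => ?_⟩
    · have hsub : {j | diagM R U i j ≠ 0} ⊆ {i} := by
        intro j hj
        by_contra hij
        exact hj (diagM_ne fun h => hij (Set.mem_singleton_iff.mpr h.symm))
      exact ⟨(Set.finite_singleton i).subset hsub,
        le_trans (Set.ncard_le_ncard hsub (Set.finite_singleton i))
          (le_of_eq (Set.ncard_singleton i))⟩
    · have hsub : {i | diagM R U i j ≠ 0} ⊆ {j} := by
        intro i hi
        by_contra hij
        exact hi (diagM_ne fun h => hij (Set.mem_singleton_iff.mpr h))
      exact ⟨(Set.finite_singleton j).subset hsub,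
        le_trans (Set.ncard_le_ncard hsub (Set.finite_singleton j))
          (le_of_eq (Set.ncard_singleton j))⟩
  · refine ((Set.finite_singleton (0 : R)).insert 1).subset ?_
    rintro x ⟨p, rfl⟩
    show (if p.1 = p.2 ∧ p.1 ∈ U then (1 : R) else 0) ∈ ({1, 0} : Set R)
    split <;> simp

lemma mul3_diagM {R : Type*} [Ring R] (U V : Set ℕ) (A : ℕ → ℕ → R) (i j : ℕ) :
    mul3 (diagM R U) A (diagM R V) i j
      = (if i ∈ U then 1 else 0) * A i j * (if j ∈ V then 1 else 0) := by
  unfold mul3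
  have hinner : ∀ k : ℕ,
      (∑ᶠ l, diagM R U i k * A k l * diagM R V l j)
        = diagM R U i k * A k j * diagM R V j j := by
    intro k
    refine finsum_eq_single _ j fun l hl => ?_
    rw [diagM_ne hl, mul_zero]
  rw [finsum_congr hinner]
  rw [finsum_eq_single _ i fun k hk => by rw [diagM_ne fun h => hk h.symm, zero_mul, zero_mul]]
  simp [diagM]

/-- Two support positions of `A` conflict when they share a row, a column, or
one of the two "crossing" positions also carries a nonzero entry of `A`. -/
def Conflict {R : Type*} [Ring R] (A : ℕ → ℕ → R) (p q : ℕ × ℕ) : Prop :=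
  p ≠ q ∧ A p.1 p.2 ≠ 0 ∧ A q.1 q.2 ≠ 0 ∧ (A p.1 q.2 ≠ 0 ∨ A q.1 p.2 ≠ 0)

lemma Conflict.symm {R : Type*} [Ring R] {A : ℕ → ℕ → R} {p q : ℕ × ℕ}
    (h : Conflict A p q) : Conflict A q p :=
  ⟨h.1.symm, h.2.2.1, h.2.1, h.2.2.2.symm⟩

/-- The greedy coloring of positions, transported through `Nat.pairEquiv`. -/
noncomputable def cpair {R : Type*} [Ring R] (A : ℕ → ℕ → R) (p : ℕ × ℕ) : ℕ :=
  greedyCol (fun n m => Conflict A (Nat.pairEquiv.symm n) (Nat.pairEquiv.symm m))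
    (Nat.pairEquiv p)

lemma cpair_ne {R : Type*} [Ring R] {A : ℕ → ℕ → R} {p q : ℕ × ℕ}
    (h : Conflict A p q) : cpair A p ≠ cpair A q := by
  set adj := fun n m => Conflict A (Nat.pairEquiv.symm n) (Nat.pairEquiv.symm m) with hadj
  have h1 : adj (Nat.pairEquiv p) (Nat.pairEquiv q) := by
    simp only [hadj, Equiv.symm_apply_apply]; exact h
  have h2 : adj (Nat.pairEquiv q) (Nat.pairEquiv p) := by
    simp only [hadj, Equiv.symm_apply_apply]; exact h.symm
  have hne : Nat.pairEquiv p ≠ Nat.pairEquiv q := fun he => h.1 (Nat.pairEquiv.injective he)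
  rcases lt_or_gt_of_ne hne with hlt | hgt
  · exact (greedyCol_ne adj hlt h2).symm
  · exact greedyCol_ne adj hgt h1

lemma cpair_lt {R : Type*} [Ring R] {A : ℕ → ℕ → R} {N : ℕ}
    (hrow : ∀ i, {j | A i j ≠ 0}.Finite ∧ {j | A i j ≠ 0}.ncard ≤ N)
    (hcol : ∀ j, {i | A i j ≠ 0}.Finite ∧ {i | A i j ≠ 0}.ncard ≤ N)
    (p : ℕ × ℕ) : cpair A p < 2 * N * N + 1 := by
  set adj := fun n m => Conflict A (Nat.pairEquiv.symm n) (Nat.pairEquiv.symm m) with hadj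
  by_cases hp : A p.1 p.2 ≠ 0
  · set rowF : ℕ → Finset ℕ := fun i => (hrow i).1.toFinset with hrowF
    set colF : ℕ → Finset ℕ := fun j => (hcol j).1.toFinset with hcolF
    have hrowcard : ∀ i, (rowF i).card ≤ N := fun i => by
      rw [hrowF]; rw [← Set.ncard_eq_toFinset_card _ (hrow i).1]; exact (hrow i).2
    have hcolcard : ∀ j, (colF j).card ≤ N := fun j => by
      rw [hcolF]; rw [← Set.ncard_eq_toFinset_card _ (hcol j).1]; exact (hcol j).2
    set s : Finset ℕ :=
      ((rowF p.1).biUnion fun j' => (colF j').image fun i' => Nat.pairEquiv (i', j'))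
      ∪ ((colF p.2).biUnion fun i' => (rowF i').image fun j' => Nat.pairEquiv (i', j'))
      with hsdef
    refine greedyCol_lt adj s ?_ ?_
    · intro m hm
      rw [hadj, Equiv.symm_apply_apply] at hm
      obtain ⟨hne, -, hq, hor⟩ := hm
      set q := Nat.pairEquiv.symm m with hqdef
      have hmq : Nat.pairEquiv q = m := Equiv.apply_symm_apply _ m
      rcases hor with h1 | h1
      · apply Finset.mem_union_left
        apply Finset.mem_biUnion.mpr
        refine ⟨q.2, (hrow p.1).1.mem_toFinset.mpr h1, Finset.mem_image.mpr
          ⟨q.1, (hcol q.2).1.mem_toFinset.mpr hq, ?_⟩⟩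
        rw [Prod.mk.eta, hmq]
      · apply Finset.mem_union_right
        apply Finset.mem_biUnion.mpr
        refine ⟨q.1, (hcol p.2).1.mem_toFinset.mpr h1, Finset.mem_image.mpr
          ⟨q.2, (hrow q.1).1.mem_toFinset.mpr hq, ?_⟩⟩
        rw [Prod.mk.eta, hmq]
    · have hc1 : (((rowF p.1).biUnion fun j' =>
          (colF j').image fun i' => Nat.pairEquiv (i', j'))).card ≤ N * N := by
        refine le_trans (Finset.card_biUnion_le_card_mul _ _ N fun j' _ =>
          le_trans Finset.card_image_le (hcolcard j')) ?_
        exact Nat.mul_le_mul_right N (hrowcard p.1)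
      have hc2 : (((colF p.2).biUnion fun i' =>
          (rowF i').image fun j' => Nat.pairEquiv (i', j'))).card ≤ N * N := by
        refine le_trans (Finset.card_biUnion_le_card_mul _ _ N fun i' _ =>
          le_trans Finset.card_image_le (hrowcard i')) ?_
        exact Nat.mul_le_mul_right N (hcolcard p.2)
      have := Finset.card_union_le
        ((rowF p.1).biUnion fun j' => (colF j').image fun i' => Nat.pairEquiv (i', j'))
        ((colF p.2).biUnion fun i' => (rowF i').image fun j' => Nat.pairEquiv (i', j'))
      have h2 : 2 * N * N = N * N + N * N := by ring
      rw [hsdef]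
      omega
  · refine greedyCol_lt adj ∅ ?_ (by simp)
    intro m hm
    rw [hadj, Equiv.symm_apply_apply] at hm
    exact absurd hm.2.1 hp

/-- a matrix `A` with `N(A) < ∞` is a finite sum `A = A₁ + ⋯ + A_k`
where each `A_l ∈ Γ(R) A Γ(R)` and each `A_l` has at most one nonzero entry in
every row and every column. -/
theorem stmt7 (R : Type*) [Ring R] (A : ℕ → ℕ → R) (hA : NFin A) :
    ∃ (k : ℕ) (B : Fin k → (ℕ → ℕ → R)),
      A = ∑ t, B t ∧
      ∀ t, InGAG A (B t) ∧
        (∀ i j j', B t i j ≠ 0 → B t i j' ≠ 0 → j = j') ∧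
        (∀ j i i', B t i j ≠ 0 → B t i' j ≠ 0 → i = i') := by
  classical
  obtain ⟨N, hrow, hcol⟩ := hA
  set k := 2 * N * N + 1 with hk
  set c : ℕ × ℕ → Fin k := fun p => ⟨cpair A p, cpair_lt hrow hcol p⟩ with hc
  have hcinj : ∀ p q : ℕ × ℕ, c p = c q → cpair A p = cpair A q := by
    intro p q h
    have := congrArg Fin.val h
    simpa [hc] using this
  set S : Fin k → Set ℕ := fun t => {i | ∃ j, A i j ≠ 0 ∧ c (i, j) = t} with hS
  set T : Fin k → Set ℕ := fun t => {j | ∃ i, A i j ≠ 0 ∧ c (i, j) = t} with hT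
  set B : Fin k → ℕ → ℕ → R := fun t i j =>
    (if i ∈ S t then (1 : R) else 0) * A i j * (if j ∈ T t then 1 else 0) with hB
  have hBmem : ∀ t i j, B t i j ≠ 0 → A i j ≠ 0 ∧ i ∈ S t ∧ j ∈ T t := by
    intro t i j h
    by_cases h1 : i ∈ S t
    · by_cases h2 : j ∈ T t
      · exact ⟨fun h0 => h (by simp [hB, h0]), h1, h2⟩
      · exact absurd (by simp [hB, h2]) h
    · exact absurd (by simp [hB, h1]) h
  have hclosed : ∀ t i j, A i j ≠ 0 → i ∈ S t → j ∈ T t → c (i, j) = t := by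
    intro t i j hij hiS hjT
    obtain ⟨j0, hj0, hcj0⟩ := hiS
    obtain ⟨i1, hi1, hci1⟩ := hjT
    by_cases heq : (i, j0) = (i1, j)
    · rw [Prod.ext_iff] at heq
      obtain ⟨hi1', hj0'⟩ := heq
      simp only at hi1' hj0'
      rw [hj0'] at hcj0
      exact hcj0
    · exfalso
      exact cpair_ne ⟨heq, hj0, hi1, Or.inl hij⟩ (hcinj _ _ (hcj0.trans hci1.symm))
  have hBval : ∀ t i j, A i j ≠ 0 → B t i j = if t = c (i, j) then A i j else 0 := by
    intro t i j hij
    by_cases ht : t = c (i, j)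
    · rw [if_pos ht]
      have h1 : i ∈ S t := ⟨j, hij, ht.symm⟩
      have h2 : j ∈ T t := ⟨i, hij, ht.symm⟩
      simp [hB, h1, h2]
    · rw [if_neg ht]
      by_cases h1 : i ∈ S t
      · by_cases h2 : j ∈ T t
        · exact absurd (hclosed t i j hij h1 h2).symm ht
        · simp [hB, h2]
      · simp [hB, h1]
  refine ⟨k, B, ?_, fun t => ⟨?_, ?_, ?_⟩⟩
  · funext i j
    rw [Finset.sum_apply, Finset.sum_apply]
    by_cases hij : A i j = 0
    · simp [hB, hij]
    · rw [Finset.sum_congr rfl fun t _ => hBval t i j hij]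
      simp
  · refine ⟨1, fun _ => diagM R (S t), fun _ => diagM R (T t),
      fun _ => ⟨InGamma_diagM R _, InGamma_diagM R _⟩, ?_⟩
    rw [show (∑ _t : Fin 1, mul3 (diagM R (S t)) A (diagM R (T t)))
        = mul3 (diagM R (S t)) A (diagM R (T t)) by simp]
    funext i j
    rw [mul3_diagM]
  · intro i j j' h h'
    obtain ⟨hij, hiS, hjT⟩ := hBmem t i j h
    obtain ⟨hij', hiS', hjT'⟩ := hBmem t i j' h'
    by_contra hne
    have hconf : Conflict A (i, j) (i, j') :=
      ⟨fun he => hne (congrArg Prod.snd he), hij, hij', Or.inl hij'⟩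
    exact cpair_ne hconf (hcinj _ _
      ((hclosed t i j hij hiS hjT).trans (hclosed t i j' hij' hiS' hjT').symm))
  · intro j i i' h h'
    obtain ⟨hij, hiS, hjT⟩ := hBmem t i j h
    obtain ⟨hij', hiS', hjT'⟩ := hBmem t i' j h'
    by_contra hne
    have hconf : Conflict A (i, j) (i', j) :=
      ⟨fun he => hne (congrArg Prod.fst he), hij, hij', Or.inl hij⟩
    exact cpair_ne hconf (hcinj _ _
      ((hclosed t i j hij hiS hjT).trans (hclosed t i' j hij' hiS' hjT').symm))
end

section
/- Let A be an ℕ×ℕ matrix over a unital ring R with N(A) < ∞ and such that some row of A has at least 2 nonzero entries (r(A) > 1). Then A = A₁ + ⋯ + A_k where each A_i lies in Γ(R)AΓ(R), each A_i has strictly fewer maximal nonzero row entries than A (r(A_i) < r(A)), and c(A_i) ≤ c(A). -/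
open scoped BigOperators

/-- `r(A)`: the supremum over rows of the number of nonzero entries. -/
noncomputable def rsup {R : Type*} [Ring R] (A : ℕ → ℕ → R) : ℕ :=
  ⨆ i, {j | A i j ≠ 0}.ncard

/-- `c(A)`: the supremum over columns of the number of nonzero entries. -/
noncomputable def csup {R : Type*} [Ring R] (A : ℕ → ℕ → R) : ℕ :=
  ⨆ j, {i | A i j ≠ 0}.ncard


/-!
Write `A = A₁ + (A - A₁)`, where `A₁` keeps only the leftmost nonzero entry (the pivot) of each
row. Then `r(A₁) ≤ 1`, `r(A - A₁) ≤ r(A) - 1`, and both are supported inside the support of `A`,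
so columns do not grow. To get `A₁ ∈ Γ(R)AΓ(R)`, colour the rows so that no row has a nonzero
entry in the pivot column of another row of the same colour. Since `N(A) < ∞` this conflict graph
has bounded degree, so a greedy colouring uses finitely many colours. If `E_S ∈ Γ(R)` denotes the
diagonal idempotent on `S`, then `Σ_t E_{I_t} A E_{J_t} = A₁`, where `I_t` is the colour class `t`
and `J_t` its set of pivot columns; and `A - A₁ = A + Σ_t E_{I_t} A (-E_{J_t})`.
-/

lemma Nat.exists_notMem_le_ncard {s : Set ℕ} (hs : s.Finite) : ∃ c ∉ s, c ≤ s.ncard := by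
  by_contra! h
  have hsub : (Finset.range (s.ncard + 1) : Set ℕ) ⊆ s := fun c hc => by
    by_contra hcs
    have := h c hcs
    simp only [Finset.coe_range, Set.mem_Iio] at hc
    omega
  have := Set.ncard_le_ncard hsub hs
  rw [Set.ncard_coe_finset, Finset.card_range] at this
  omega

lemma Set.ncard_biUnion_le_mul {ι α : Type*} {s : Set ι} (hs : s.Finite) {t : ι → Set α}
    {N : ℕ} (ht : ∀ i ∈ s, (t i).ncard ≤ N) : (⋃ i ∈ s, t i).ncard ≤ s.ncard * N := by
  rw [← hs.coe_toFinset, Set.ncard_coe_finset]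
  calc (⋃ i ∈ hs.toFinset, t i).ncard ≤ ∑ i ∈ hs.toFinset, (t i).ncard :=
        Finset.set_ncard_biUnion_le _ _
    _ ≤ hs.toFinset.card * N := by
        simpa using Finset.sum_le_card_nsmul _ _ N fun i hi => ht i (by simpa using hi)

namespace SimpleGraph

noncomputable def greedyColor (G : SimpleGraph ℕ) : ℕ → ℕ
  | i => sInf {c | ∀ i' < i, G.Adj i i' → greedyColor G i' ≠ c}

variable (G : SimpleGraph ℕ)

lemma greedyColor_eq (i : ℕ) :
    G.greedyColor i = sInf {c | ∀ i' < i, G.Adj i i' → G.greedyColor i' ≠ c} := by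
  rw [greedyColor]

lemma greedyColor_ne {i i' : ℕ} (h : i' < i) (hadj : G.Adj i i') :
    G.greedyColor i' ≠ G.greedyColor i := by
  have hne : {c | ∀ i' < i, G.Adj i i' → G.greedyColor i' ≠ c}.Nonempty := by
    obtain ⟨c, hc⟩ := ((Set.finite_Iio i).image G.greedyColor).infinite_compl.nonempty
    exact ⟨c, fun i' hi' _ hc' => hc ⟨i', hi', hc'⟩⟩
  have := Nat.sInf_mem hne
  rw [← greedyColor_eq] at this
  exact this i' h hadj

lemma greedyColor_le_ncard_neighborSet {i : ℕ} (hfin : (G.neighborSet i).Finite) :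
    G.greedyColor i ≤ (G.neighborSet i).ncard := by
  obtain ⟨c, hc, hcle⟩ := Nat.exists_notMem_le_ncard (hfin.image G.greedyColor)
  rw [greedyColor_eq]
  have hmem : c ∈ {c | ∀ i' < i, G.Adj i i' → G.greedyColor i' ≠ c} :=
    fun i' _ hadj hc' => hc ⟨i', hadj, hc'⟩
  exact (Nat.sInf_le hmem).trans (hcle.trans (Set.ncard_image_le hfin))

theorem colorable_of_ncard_neighborSet_le {D : ℕ}
    (hD : ∀ i, (G.neighborSet i).Finite ∧ (G.neighborSet i).ncard ≤ D) :
    G.Colorable (D + 1) := by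
  refine ⟨Coloring.mk (fun i => ⟨G.greedyColor i, ?_⟩) fun {i i'} hadj => ?_⟩
  · exact Nat.lt_succ_of_le ((G.greedyColor_le_ncard_neighborSet (hD i).1).trans (hD i).2)
  · rw [Ne, Fin.mk.injEq]
    rcases lt_trichotomy i i' with h | rfl | h
    · exact G.greedyColor_ne h hadj.symm
    · exact (G.irrefl hadj).elim
    · exact (G.greedyColor_ne h hadj).symm

end SimpleGraph

section Matrices

variable {R : Type*} [Ring R]

open scoped Classical in
noncomputable def diagIndicator (v : R) (S : Set ℕ) : ℕ → ℕ → R :=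
  fun i k => if i = k ∧ i ∈ S then v else 0

lemma diagIndicator_eq_zero_of_ne (v : R) (S : Set ℕ) {i k : ℕ} (h : i ≠ k) :
    diagIndicator v S i k = 0 :=
  if_neg fun h' => h h'.1

lemma inGamma_diagIndicator (v : R) (S : Set ℕ) : InGamma (diagIndicator v S) := by
  have hrow : ∀ i, {k | diagIndicator v S i k ≠ 0} ⊆ {i} := fun i k hk => by
    by_contra h; exact hk (diagIndicator_eq_zero_of_ne v S (Ne.symm h))
  have hcol : ∀ k, {i | diagIndicator v S i k ≠ 0} ⊆ {k} := fun k i hi => by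
    by_contra h; exact hi (diagIndicator_eq_zero_of_ne v S h)
  refine ⟨⟨1, fun i => ⟨(Set.finite_singleton i).subset (hrow i), ?_⟩,
    fun k => ⟨(Set.finite_singleton k).subset (hcol k), ?_⟩⟩, ?_⟩
  · simpa using Set.ncard_le_ncard (hrow i)
  · simpa using Set.ncard_le_ncard (hcol k)
  · refine ((Set.finite_singleton (0 : R)).insert v).subset ?_
    rintro x ⟨p, rfl⟩
    simp only [diagIndicator]
    split_ifs <;> simp

open scoped Classical in
lemma mul3_diagIndicator (v w : R) (I J : Set ℕ) (A : ℕ → ℕ → R) (i j : ℕ) :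
    mul3 (diagIndicator v I) A (diagIndicator w J) i j =
      if i ∈ I ∧ j ∈ J then v * A i j * w else 0 := by
  have hinner : ∀ k, ∑ᶠ l, diagIndicator v I i k * A k l * diagIndicator w J l j =
      diagIndicator v I i k * A k j * diagIndicator w J j j := fun k =>
    finsum_eq_single _ j fun l hl => by rw [diagIndicator_eq_zero_of_ne w J hl, mul_zero]
  have hdiag : mul3 (diagIndicator v I) A (diagIndicator w J) i j =
      diagIndicator v I i i * A i j * diagIndicator w J j j := by
    simp_rw [mul3, hinner]
    exact finsum_eq_single _ i fun k hk => by
      rw [diagIndicator_eq_zero_of_ne v I hk.symm, zero_mul, zero_mul]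
  rw [hdiag]
  by_cases hi : i ∈ I <;> by_cases hj : j ∈ J <;> simp [diagIndicator, hi, hj]

lemma inGAG_self (A : ℕ → ℕ → R) : InGAG A A := by
  refine ⟨1, fun _ => diagIndicator 1 Set.univ, fun _ => diagIndicator 1 Set.univ,
    fun _ => ⟨inGamma_diagIndicator _ _, inGamma_diagIndicator _ _⟩, ?_⟩
  ext i j
  simp [mul3_diagIndicator]

lemma InGAG.add {A B C : ℕ → ℕ → R} (hB : InGAG A B) (hC : InGAG A C) : InGAG A (B + C) := by
  obtain ⟨m, P, Q, hPQ, rfl⟩ := hB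
  obtain ⟨n, P', Q', hPQ', rfl⟩ := hC
  refine ⟨m + n, Fin.append P P', Fin.append Q Q', fun t => ?_, ?_⟩
  · refine Fin.addCases (fun s => ?_) (fun s => ?_) t <;> simp [hPQ, hPQ']
  · simp [Fin.sum_univ_add]

end Matrices

section Pivot

variable {R : Type*} [Ring R] (A : ℕ → ℕ → R)

-- junk value `0` on a zero row
noncomputable def pivot (i : ℕ) : ℕ := sInf {j | A i j ≠ 0}

noncomputable def pivotPart : ℕ → ℕ → R := fun i j => if j = pivot A i then A i j else 0

lemma pivot_mem {i : ℕ} (h : {j | A i j ≠ 0}.Nonempty) : A i (pivot A i) ≠ 0 := Nat.sInf_mem h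

lemma sub_pivotPart_apply (i j : ℕ) :
    (A - pivotPart A) i j = if j = pivot A i then 0 else A i j := by
  by_cases h : j = pivot A i <;> simp [pivotPart, h]

lemma ne_zero_of_pivotPart_ne_zero {i j : ℕ} (h : pivotPart A i j ≠ 0) : A i j ≠ 0 := by
  by_cases hj : j = pivot A i <;> simp_all [pivotPart]

lemma ne_zero_of_sub_pivotPart_ne_zero {i j : ℕ} (h : (A - pivotPart A) i j ≠ 0) :
    A i j ≠ 0 := by
  rw [sub_pivotPart_apply] at h
  by_cases hj : j = pivot A i <;> simp_all

def pivotConflictGraph : SimpleGraph ℕ :=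
  SimpleGraph.fromRel fun i i' => A i' (pivot A i') ≠ 0 ∧ A i (pivot A i') ≠ 0

lemma exists_colorable_pivotConflictGraph (hA : NFin A) :
    ∃ K, (pivotConflictGraph A).Colorable K := by
  obtain ⟨N, hrow, hcol⟩ := hA
  refine ⟨N * N + N + 1, SimpleGraph.colorable_of_ncard_neighborSet_le _ fun i => ?_⟩
  set U := ⋃ l ∈ {j | A i j ≠ 0}, {i' | A i' l ≠ 0}
  have hsub : (pivotConflictGraph A).neighborSet i ⊆ U ∪ {i' | A i' (pivot A i) ≠ 0} := by
    rintro i' ⟨-, h | h⟩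
    · exact Or.inl (Set.mem_biUnion h.2 h.1)
    · exact Or.inr h.2
  have hU : U.ncard ≤ N * N :=
    (Set.ncard_biUnion_le_mul (hrow i).1 fun l _ => (hcol l).2).trans
      (Nat.mul_le_mul_right N (hrow i).2)
  have hfin : (U ∪ {i' | A i' (pivot A i) ≠ 0}).Finite :=
    ((hrow i).1.biUnion fun l _ => (hcol l).1).union (hcol _).1
  refine ⟨hfin.subset hsub, (Set.ncard_le_ncard hsub hfin).trans ?_⟩
  exact (Set.ncard_union_le _ _).trans (Nat.add_le_add hU (hcol _).2)

variable {A} {K : ℕ} (C : (pivotConflictGraph A).Coloring (Fin K))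

def pivotColumns (t : Fin K) : Set ℕ := pivot A '' {i | C i = t ∧ A i (pivot A i) ≠ 0}

lemma mem_pivotColumns_iff {i j : ℕ} (h : A i j ≠ 0) :
    j ∈ pivotColumns C (C i) ↔ j = pivot A i := by
  constructor
  · rintro ⟨i', ⟨hci', hi'⟩, rfl⟩
    by_contra hne
    have hadj : (pivotConflictGraph A).Adj i i' :=
      ⟨fun h => hne (by rw [h]), Or.inl ⟨hi', h⟩⟩
    exact C.valid hadj hci'.symm
  · rintro rfl
    exact ⟨i, ⟨rfl, h⟩, rfl⟩

lemma sum_mul3_pivotColumns (v : R) :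
    ∑ t, mul3 (diagIndicator 1 {i | C i = t}) A (diagIndicator v (pivotColumns C t)) =
      fun i j => pivotPart A i j * v := by
  classical
  ext i j
  simp only [Finset.sum_apply, mul3_diagIndicator, Set.mem_ofPred_eq, one_mul]
  rw [Finset.sum_eq_single (C i) (fun t _ ht => if_neg fun h => ht h.1.symm) (by simp)]
  by_cases hA : A i j = 0
  · simp [pivotPart, hA]
  · simp [pivotPart, mem_pivotColumns_iff C hA]


lemma inGAG_pivotPart_mul (hA : NFin A) (v : R) :
    InGAG A fun i j => pivotPart A i j * v := by
  obtain ⟨K, ⟨C⟩⟩ := exists_colorable_pivotConflictGraph A hA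
  exact ⟨K, fun t => diagIndicator 1 {i | C i = t}, fun t => diagIndicator v (pivotColumns C t),
    fun _ => ⟨inGamma_diagIndicator _ _, inGamma_diagIndicator _ _⟩,
    (sum_mul3_pivotColumns C v).symm⟩

end Pivot

section RowColumnBounds

variable {R : Type*} [Ring R] {A : ℕ → ℕ → R}

lemma ncard_row_le_rsup (hA : NFin A) (i : ℕ) : {j | A i j ≠ 0}.ncard ≤ rsup A := by
  obtain ⟨N, hrow, -⟩ := hA
  exact le_ciSup ⟨N, by rintro _ ⟨i, rfl⟩; exact (hrow i).2⟩ i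

lemma csup_le_csup_of_ne_zero (hA : NFin A) {B : ℕ → ℕ → R}
    (hB : ∀ i j, B i j ≠ 0 → A i j ≠ 0) : csup B ≤ csup A := by
  obtain ⟨N, -, hcol⟩ := hA
  refine ciSup_le fun j => (Set.ncard_le_ncard (fun i => hB i j) (hcol j).1).trans ?_
  exact le_ciSup (f := fun j => {i | A i j ≠ 0}.ncard)
    ⟨N, by rintro _ ⟨j, rfl⟩; exact (hcol j).2⟩ j

lemma rsup_pivotPart_le_one (A : ℕ → ℕ → R) : rsup (pivotPart A) ≤ 1 := by
  refine ciSup_le fun i => ?_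
  have hsub : {j | pivotPart A i j ≠ 0} ⊆ {pivot A i} := fun j hj => by
    by_contra h; exact hj (if_neg h)
  simpa using Set.ncard_le_ncard hsub

lemma rsup_sub_pivotPart_lt (hA : NFin A) (hpos : 0 < rsup A) :
    rsup (A - pivotPart A) < rsup A := by
  suffices ∀ i, {j | (A - pivotPart A) i j ≠ 0}.ncard ≤ rsup A - 1 from
    (ciSup_le this).trans_lt (Nat.sub_lt hpos one_pos)
  intro i
  have hrow : {j | (A - pivotPart A) i j ≠ 0} = {j | A i j ≠ 0} \ {pivot A i} := by
    ext j
    by_cases h : j = pivot A i <;> simp [sub_pivotPart_apply, h]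
  rw [hrow]
  rcases Set.eq_empty_or_nonempty {j | A i j ≠ 0} with hempty | hne
  · simp [hempty]
  · rw [Set.ncard_sdiff_singleton_of_mem (s := {j | A i j ≠ 0}) (pivot_mem A hne)]
    exact Nat.sub_le_sub_right (ncard_row_le_rsup hA i) 1

end RowColumnBounds

/-- if `N(A) < ∞` and `r(A) > 1`, then `A = A₁ + ⋯ + A_k` with
`A_i ∈ Γ(R) A Γ(R)`, `r(A_i) < r(A)` and `c(A_i) ≤ c(A)`. -/
theorem stmt8 (R : Type*) [Ring R] (A : ℕ → ℕ → R) (hA : NFin A)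
    (hr : 1 < rsup A) :
    ∃ (k : ℕ) (B : Fin k → (ℕ → ℕ → R)),
      A = ∑ t, B t ∧
      ∀ t, InGAG A (B t) ∧ rsup (B t) < rsup A ∧ csup (B t) ≤ csup A := by
  have hpivot : InGAG A (pivotPart A) := by simpa using inGAG_pivotPart_mul hA 1
  have hrest : InGAG A (A - pivotPart A) := by
    convert (inGAG_self A).add (inGAG_pivotPart_mul hA (-1)) using 1
    ext i j
    simp [sub_eq_add_neg]
  refine ⟨2, ![pivotPart A, A - pivotPart A], by simp, fun t => ?_⟩
  fin_cases t
  · exact ⟨hpivot, (rsup_pivotPart_le_one A).trans_lt hr,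
      csup_le_csup_of_ne_zero hA fun _ _ => ne_zero_of_pivotPart_ne_zero A⟩
  · exact ⟨hrest, rsup_sub_pivotPart_lt hA (by omega),
      csup_le_csup_of_ne_zero hA fun _ _ => ne_zero_of_sub_pivotPart_ne_zero A⟩
end

section
/- Let k be a field. Then M_∞(k), the ring of ℕ×ℕ matrices over k with only finitely many nonzero entries, is the only proper nonzero two-sided ideal of Karoubi's cone Γ(k). -/
open scoped BigOperators

/-- The (locally finite) matrix product. -/
noncomputable def gmul {R : Type*} [Ring R] (A B : ℕ → ℕ → R) : ℕ → ℕ → R :=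
  fun i j => ∑ᶠ (l : ℕ), A i l * B l j

/-- Karoubi's cone, as a set of matrices. -/
def GammaSet (R : Type*) [Ring R] : Set (ℕ → ℕ → R) := {A | InGamma A}

/-- `M_∞(R)`: matrices with finitely many nonzero entries. -/
def MinfSet (R : Type*) [Ring R] : Set (ℕ → ℕ → R) :=
  {A | {p : ℕ × ℕ | A p.1 p.2 ≠ 0}.Finite}

/-- A two-sided ideal of `Γ(R)`, as a subset of matrices. -/
def IsTwoSidedIdealOfGamma (R : Type*) [Ring R] (I : Set (ℕ → ℕ → R)) : Prop :=
  I ⊆ GammaSet R ∧ (0 : ℕ → ℕ → R) ∈ I ∧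
  (∀ A B, A ∈ I → B ∈ I → A + B ∈ I) ∧
  (∀ A ∈ I, -A ∈ I) ∧
  (∀ A B, A ∈ GammaSet R → B ∈ I → gmul A B ∈ I ∧ gmul B A ∈ I)

/-!
A matrix with finite support keeps finite support after multiplication by matrices whose columns
(resp. rows) are finite, so `M_∞(k)` is an ideal of `Γ(k)`. Conversely, let `I` be a nonzero
ideal. Sandwiching a nonzero entry of an element of `I` between matrix units yields every matrix
unit, hence `M_∞(k) ⊆ I`. If `I` contained some `B` with infinite support, then, since each
support point shares a row or column support with only finitely many others, one can choose
positions `(σ n, τ n)` greedily with `B (σ m) (τ n) ≠ 0 ↔ m = n`. Selecting the rows `σ` and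
columns `τ` of `B` and rescaling by the inverses of its (finitely many) entries turns `B` into
the identity matrix, so `I = Γ(k)`.
-/

open Function

section Ring

variable {R : Type*} [Ring R]

lemma InGamma.finite_row {A : ℕ → ℕ → R} (hA : InGamma A) (i : ℕ) : {j | A i j ≠ 0}.Finite :=
  (hA.1.choose_spec.1 i).1

lemma InGamma.finite_col {A : ℕ → ℕ → R} (hA : InGamma A) (j : ℕ) : {i | A i j ≠ 0}.Finite :=
  (hA.1.choose_spec.2 j).1

lemma InGamma.transpose {A : ℕ → ℕ → R} (hA : InGamma A) : InGamma fun i j => A j i := by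
  obtain ⟨⟨N, hrow, hcol⟩, hrange⟩ := hA
  refine ⟨⟨N, hcol, hrow⟩, ?_⟩
  rwa [← Equiv.prodComm ℕ ℕ |>.surjective.range_comp] at hrange

lemma inGamma_of_subsingleton {A : ℕ → ℕ → R} (hrow : ∀ i, {j | A i j ≠ 0}.Subsingleton)
    (hcol : ∀ j, {i | A i j ≠ 0}.Subsingleton)
    (hrange : (Set.range fun p : ℕ × ℕ => A p.1 p.2).Finite) : InGamma A :=
  ⟨⟨1, fun i => ⟨(hrow i).finite, (Set.ncard_le_one (hrow i).finite).2 (hrow i)⟩,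
    fun j => ⟨(hcol j).finite, (Set.ncard_le_one (hcol j).finite).2 (hcol j)⟩⟩, hrange⟩

def monomialMatrix (σ : ℕ → ℕ) (d : ℕ → R) : ℕ → ℕ → R :=
  fun i j => if σ i = j then d i else 0

lemma eq_of_monomialMatrix_ne_zero {σ : ℕ → ℕ} {d : ℕ → R} {i j : ℕ}
    (h : monomialMatrix σ d i j ≠ 0) : σ i = j :=
  of_not_not fun hij => h (if_neg hij)

lemma inGamma_monomialMatrix {σ : ℕ → ℕ} (hσ : Injective σ) {d : ℕ → R}
    (hd : (Set.range d).Finite) : InGamma (monomialMatrix σ d) := by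
  refine inGamma_of_subsingleton (fun i => ?_) (fun j => ?_) ((hd.insert 0).subset ?_)
  · exact fun a ha b hb =>
      (eq_of_monomialMatrix_ne_zero ha).symm.trans (eq_of_monomialMatrix_ne_zero hb)
  · exact fun a ha b hb =>
      hσ ((eq_of_monomialMatrix_ne_zero ha).trans (eq_of_monomialMatrix_ne_zero hb).symm)
  · rintro _ ⟨⟨i, j⟩, rfl⟩
    dsimp only [monomialMatrix]
    split_ifs
    exacts [Set.mem_insert_of_mem _ ⟨i, rfl⟩, Set.mem_insert _ _]

lemma gmul_monomialMatrix (σ : ℕ → ℕ) (d : ℕ → R) (A : ℕ → ℕ → R) :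
    gmul (monomialMatrix σ d) A = fun i j => d i * A (σ i) j := by
  funext i j
  refine (finsum_eq_single _ (σ i) fun l hl => ?_).trans ?_
  all_goals simp_all [monomialMatrix, eq_comm]

lemma gmul_transpose_monomialMatrix (A : ℕ → ℕ → R) (τ : ℕ → ℕ) (d : ℕ → R) :
    gmul A (fun i j => monomialMatrix τ d j i) = fun i j => A i (τ j) * d j := by
  funext i j
  refine (finsum_eq_single _ (τ j) fun l hl => ?_).trans ?_
  all_goals simp_all [monomialMatrix, eq_comm]

lemma gmul_monomialMatrix_id_one (A : ℕ → ℕ → R) : gmul (monomialMatrix id 1) A = A := by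
  simp [gmul_monomialMatrix]

lemma monomialMatrix_id_one_notMem_minfSet [Nontrivial R] :
    monomialMatrix id (1 : ℕ → R) ∉ MinfSet R := by
  refine Set.infinite_of_injective_forall_mem (f := fun n => (n, n))
    (fun m n h => congrArg Prod.fst h) fun n => ?_
  simp [monomialMatrix]

lemma exists_ne_zero_of_gmul_ne_zero {A B : ℕ → ℕ → R} {i j : ℕ} (h : gmul A B i j ≠ 0) :
    ∃ l, A i l ≠ 0 ∧ B l j ≠ 0 := by
  obtain ⟨l, hl⟩ : ∃ l, A i l * B l j ≠ 0 := by
    by_contra! h'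
    exact h (finsum_eq_zero_of_forall_eq_zero h')
  exact ⟨l, left_ne_zero_of_mul hl, right_ne_zero_of_mul hl⟩

lemma minfSet_subset_gammaSet : MinfSet R ⊆ GammaSet R := by
  intro A (hA : {p : ℕ × ℕ | A p.1 p.2 ≠ 0}.Finite)
  have slice (f : ℕ → ℕ × ℕ) (hf : Injective f) : (f ⁻¹' {p | A p.1 p.2 ≠ 0}).Finite ∧
      (f ⁻¹' {p | A p.1 p.2 ≠ 0}).ncard ≤ {p : ℕ × ℕ | A p.1 p.2 ≠ 0}.ncard :=
    ⟨hA.preimage hf.injOn, Set.ncard_le_ncard_of_injOn f (fun _ hx => hx) hf.injOn hA⟩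
  refine ⟨⟨_, fun i => slice _ (Prod.mk_right_injective i),
    fun j => slice (fun i => (i, j)) (Prod.mk_left_injective j)⟩, ((hA.image fun p => A p.1 p.2).insert 0).subset ?_⟩
  rintro _ ⟨p, rfl⟩
  by_cases hp : A p.1 p.2 = 0
  exacts [hp ▸ Set.mem_insert _ _, Set.mem_insert_of_mem _ ⟨p, hp, rfl⟩]

lemma gmul_mem_minfSet_of_mem_right {A B : ℕ → ℕ → R} (hA : InGamma A) (hB : B ∈ MinfSet R) :
    gmul A B ∈ MinfSet R := by
  refine (Set.Finite.biUnion hB fun q _ =>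
    (hA.finite_col q.1).prod (Set.finite_singleton q.2)).subset ?_
  intro p hp
  obtain ⟨l, hAl, hBl⟩ := exists_ne_zero_of_gmul_ne_zero hp
  exact Set.mem_biUnion (x := (l, p.2)) hBl ⟨hAl, rfl⟩

lemma gmul_mem_minfSet_of_mem_left {A B : ℕ → ℕ → R} (hA : InGamma A) (hB : B ∈ MinfSet R) :
    gmul B A ∈ MinfSet R := by
  refine (Set.Finite.biUnion hB fun q _ =>
    (Set.finite_singleton q.1).prod (hA.finite_row q.2)).subset ?_
  intro p hp
  obtain ⟨l, hBl, hAl⟩ := exists_ne_zero_of_gmul_ne_zero hp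
  exact Set.mem_biUnion (x := (p.1, l)) hBl ⟨rfl, hAl⟩

theorem isTwoSidedIdealOfGamma_minfSet : IsTwoSidedIdealOfGamma R (MinfSet R) := by
  refine ⟨minfSet_subset_gammaSet, ?_, fun A B hA hB => ?_, fun A hA => ?_, fun A B hA hB =>
    ⟨gmul_mem_minfSet_of_mem_right hA hB, gmul_mem_minfSet_of_mem_left hA hB⟩⟩
  · simp [MinfSet]
  · refine (hA.union hB).subset fun p hp => ?_
    by_contra! h
    simp_all
  · simpa [MinfSet] using hA

lemma gmul_single_left (p q : ℕ) (c : R) (A : ℕ → ℕ → R) :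
    gmul (Matrix.single p q c) A = fun i j => if p = i then c * A q j else 0 := by
  funext i j
  by_cases hi : p = i
  · refine (finsum_eq_single _ q fun l hl => ?_).trans ?_
    all_goals simp_all [eq_comm]
  · exact (finsum_eq_zero_of_forall_eq_zero fun l => by simp [hi]).trans
      (if_neg hi).symm

lemma gmul_single_right (A : ℕ → ℕ → R) (p q : ℕ) (c : R) :
    gmul A (Matrix.single p q c) = fun i j => if q = j then A i p * c else 0 := by
  funext i j
  by_cases hj : q = j
  · refine (finsum_eq_single _ p fun l hl => ?_).trans ?_
    all_goals simp_all [eq_comm]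
  · exact (finsum_eq_zero_of_forall_eq_zero fun l => by simp [hj]).trans
      (if_neg hj).symm

lemma single_mem_minfSet (p q : ℕ) (c : R) : (Matrix.single p q c : ℕ → ℕ → R) ∈ MinfSet R :=
  (Set.finite_singleton (p, q)).subset fun _ hx =>
    Prod.ext (of_not_not fun h => hx (Matrix.single_apply_of_row_ne (Ne.symm h) _ _ _))
      (of_not_not fun h => hx (Matrix.single_apply_of_col_ne _ _ (Ne.symm h) _))

lemma sum_single_eq_self {B : ℕ → ℕ → R} (hB : {p : ℕ × ℕ | B p.1 p.2 ≠ 0}.Finite) :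
    ∑ p ∈ hB.toFinset, (Matrix.single p.1 p.2 (B p.1 p.2) : ℕ → ℕ → R) = B := by
  funext i j
  rw [Matrix.sum_apply, Finset.sum_eq_single (i, j)]
  · exact Matrix.single_apply_same _ _ _
  · rintro p - hp
    exact Matrix.single_apply_of_ne _ _ _ _ _ fun h => hp (Prod.ext h.1 h.2)
  · intro hij
    simpa using hij

namespace IsTwoSidedIdealOfGamma

variable {I : Set (ℕ → ℕ → R)} (hI : IsTwoSidedIdealOfGamma R I)
include hI

lemma subset_gammaSet : I ⊆ GammaSet R := hI.1

lemma zero_mem : (0 : ℕ → ℕ → R) ∈ I := hI.2.1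

lemma add_mem {A B : ℕ → ℕ → R} (hA : A ∈ I) (hB : B ∈ I) : A + B ∈ I := hI.2.2.1 A B hA hB

lemma gmul_mem_left {A B : ℕ → ℕ → R} (hA : InGamma A) (hB : B ∈ I) : gmul A B ∈ I :=
  (hI.2.2.2.2 A B hA hB).1

lemma gmul_mem_right {A B : ℕ → ℕ → R} (hA : InGamma A) (hB : B ∈ I) : gmul B A ∈ I :=
  (hI.2.2.2.2 A B hA hB).2

lemma minfSet_subset_of_single_mem (hsingle : ∀ p q c, (Matrix.single p q c : ℕ → ℕ → R) ∈ I) :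
    MinfSet R ⊆ I := by
  intro B hB
  rw [← sum_single_eq_self hB]
  exact Finset.sum_induction _ (· ∈ I) (fun _ _ => hI.add_mem) hI.zero_mem fun p _ => hsingle _ _ _

end IsTwoSidedIdealOfGamma

lemma InGamma.finite_support_inter_row {A : ℕ → ℕ → R} (hA : InGamma A) (i : ℕ) :
    {p : ℕ × ℕ | A p.1 p.2 ≠ 0 ∧ A i p.2 ≠ 0}.Finite :=
  ((hA.finite_row i).biUnion fun j _ => (hA.finite_col j).prod (Set.finite_singleton j)).subset
    fun _ hp => Set.mem_biUnion hp.2 ⟨hp.1, rfl⟩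

lemma InGamma.finite_support_inter_col {A : ℕ → ℕ → R} (hA : InGamma A) (j : ℕ) :
    {p : ℕ × ℕ | A p.1 p.2 ≠ 0 ∧ A p.1 j ≠ 0}.Finite :=
  ((hA.finite_col j).biUnion fun i _ => (Set.finite_singleton i).prod (hA.finite_row i)).subset
    fun _ hp => Set.mem_biUnion hp.2 ⟨rfl, hp.1⟩

lemma InGamma.exists_diagonal_submatrix {A : ℕ → ℕ → R} (hA : InGamma A)
    (hinf : {p : ℕ × ℕ | A p.1 p.2 ≠ 0}.Infinite) :
    ∃ σ τ : ℕ → ℕ, Injective σ ∧ Injective τ ∧ ∀ m n, A (σ m) (τ n) ≠ 0 ↔ m = n := by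
  obtain ⟨f, hf, hfr⟩ := exists_seq_of_forall_finset_exists (fun p : ℕ × ℕ => A p.1 p.2 ≠ 0)
    (fun q p => A q.1 p.2 = 0 ∧ A p.1 q.2 = 0) fun s _ => by
      have hbad : (⋃ q ∈ s, {p : ℕ × ℕ | A p.1 p.2 ≠ 0 ∧ A q.1 p.2 ≠ 0} ∪
          {p | A p.1 p.2 ≠ 0 ∧ A p.1 q.2 ≠ 0}).Finite :=
        s.finite_toSet.biUnion fun q _ =>
          (hA.finite_support_inter_row q.1).union (hA.finite_support_inter_col q.2)
      obtain ⟨p, hp : A p.1 p.2 ≠ 0, hps⟩ := (hinf.sdiff hbad).nonempty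
      refine ⟨p, hp, fun q hq => ⟨?_, ?_⟩⟩ <;> by_contra h <;>
        exact hps (Set.mem_biUnion hq (by simp [hp, h]))
  have hdiag (m n : ℕ) : A (f m).1 (f n).2 ≠ 0 ↔ m = n := by
    refine ⟨fun h => ?_, fun h => h ▸ hf m⟩
    by_contra hmn
    rcases lt_or_gt_of_ne hmn with hlt | hlt
    exacts [h (hfr m n hlt).1, h (hfr n m hlt).2]
  refine ⟨fun n => (f n).1, fun n => (f n).2, fun m n (h : (f m).1 = (f n).1) => ?_,
    fun m n (h : (f m).2 = (f n).2) => ?_, hdiag⟩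
  · exact (hdiag m n).1 (by rw [h]; exact hf n)
  · exact (hdiag m n).1 (by rw [← h]; exact hf m)

end Ring

section DivisionRing

variable {K : Type*} [DivisionRing K] {I : Set (ℕ → ℕ → K)}

lemma IsTwoSidedIdealOfGamma.single_mem (hI : IsTwoSidedIdealOfGamma K I) {A : ℕ → ℕ → K}
    (hA : A ∈ I) {i₀ j₀ : ℕ} (hA₀ : A i₀ j₀ ≠ 0) (p q : ℕ) (c : K) :
    (Matrix.single p q c : ℕ → ℕ → K) ∈ I := by
  have hunit (p q : ℕ) (c : K) : InGamma (Matrix.single p q c : ℕ → ℕ → K) :=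
    minfSet_subset_gammaSet (single_mem_minfSet p q c)
  have h := hI.gmul_mem_right (hunit j₀ q 1) (hI.gmul_mem_left (hunit p i₀ (c * (A i₀ j₀)⁻¹)) hA)
  have hprod : gmul (gmul (Matrix.single p i₀ (c * (A i₀ j₀)⁻¹)) A) (Matrix.single j₀ q 1) =
      Matrix.single p q c := by
    rw [gmul_single_left, gmul_single_right]
    funext i j
    simp only [Matrix.single_apply, inv_mul_cancel_right₀ hA₀, mul_one]
    split_ifs <;> simp_all
  exact hprod ▸ h

lemma IsTwoSidedIdealOfGamma.eq_gammaSet_of_not_subset_minfSet (hI : IsTwoSidedIdealOfGamma K I)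
    {B : ℕ → ℕ → K} (hB : B ∈ I) (hBinf : B ∉ MinfSet K) : I = GammaSet K := by
  have hBΓ : InGamma B := hI.subset_gammaSet hB
  obtain ⟨σ, τ, hσ, hτ, hdiag⟩ := hBΓ.exists_diagonal_submatrix hBinf
  have hP : InGamma (monomialMatrix σ fun n => (B (σ n) (τ n))⁻¹) := by
    refine inGamma_monomialMatrix hσ ((hBΓ.2.image Inv.inv).subset ?_)
    rintro _ ⟨n, rfl⟩
    exact ⟨_, ⟨(σ n, τ n), rfl⟩, rfl⟩
  have hQ : InGamma fun i j => monomialMatrix τ (1 : ℕ → K) j i :=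
    (inGamma_monomialMatrix hτ (Set.finite_singleton 1 |>.subset Set.range_const_subset)).transpose
  have hone : monomialMatrix id 1 ∈ I := by
    convert hI.gmul_mem_right hQ (hI.gmul_mem_left hP hB) using 1
    rw [gmul_monomialMatrix, gmul_transpose_monomialMatrix]
    funext m n
    by_cases hmn : m = n
    · subst hmn
      simp [monomialMatrix, inv_mul_cancel₀ ((hdiag m m).2 rfl)]
    · have hzero : B (σ m) (τ n) = 0 := not_not.mp (mt (hdiag m n).1 hmn)
      simp [monomialMatrix, hmn, hzero]
  refine hI.subset_gammaSet.antisymm fun C hC => ?_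
  simpa only [gmul_monomialMatrix_id_one] using hI.gmul_mem_right hC hone

end DivisionRing

/-- over a field `k`, `M_∞(k)` is the only proper nonzero
two-sided ideal of Karoubi's cone `Γ(k)`. -/
theorem stmt9 (k : Type*) [Field k] :
    IsTwoSidedIdealOfGamma k (MinfSet k) ∧
    MinfSet k ≠ GammaSet k ∧ (∃ A ∈ MinfSet k, A ≠ 0) ∧
    ∀ I : Set (ℕ → ℕ → k), IsTwoSidedIdealOfGamma k I →
      (∃ A ∈ I, A ≠ 0) → I ≠ GammaSet k → I = MinfSet k := by
  refine ⟨isTwoSidedIdealOfGamma_minfSet, fun h => ?_, ⟨_, single_mem_minfSet 0 0 1, ?_⟩,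
    fun I hI ⟨A, hA, hA0⟩ hI_ne => ?_⟩
  · have hone : monomialMatrix id (1 : ℕ → k) ∈ GammaSet k :=
      inGamma_monomialMatrix injective_id ((Set.finite_singleton 1).subset Set.range_const_subset)
    exact monomialMatrix_id_one_notMem_minfSet (h ▸ hone)
  · exact fun h => one_ne_zero (congrFun (congrFun h 0) 0)
  · obtain ⟨i₀, j₀, hA₀⟩ : ∃ i j, A i j ≠ 0 := by
      by_contra! h
      exact hA0 (funext fun i => funext (h i))
    refine Set.Subset.antisymm (fun B hB => ?_)
      (hI.minfSet_subset_of_single_mem (hI.single_mem hA hA₀))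
    by_contra hB_inf
    exact hI_ne (hI.eq_gammaSet_of_not_subset_minfSet hB hB_inf)
end

section
/- Let I be a two-sided *-ideal of the *-algebra Γ^∞ (the span in B(ℓ²) of all operators diag(α)U_f with α ∈ ℓ^∞ and f a partial injection of ℕ). For T = diag(α)U_f, one has T ∈ I if and only if |T| = (T*T)^{1/2} ∈ I. Moreover |T| = diag(|f†_*(α)|) and the partial isometry V in the polar decomposition T = V|T| lies in Γ^∞, namely V = diag(ν_α)U_f with ν_α(n) = α(n)/|α(n)| if α(n) ≠ 0 and 0 otherwise. -/
open Classical

noncomputable section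

/-- The inverse monoid `emb` of partial injections of `ℕ`, modelled as functions
`ℕ → Option ℕ` that are injective where defined. -/
def PInj : Type :=
  {f : ℕ → Option ℕ // ∀ ⦃a b c : ℕ⦄, f a = some c → f b = some c → a = b}

/-- Composition of partial injections: `(f.comp g) n = f (g n)`. -/
def PInj.comp (f g : PInj) : PInj :=
  ⟨fun n => (g.1 n).bind f.1, by
    intro a b c ha hb
    rw [Option.bind_eq_some_iff] at ha hb
    obtain ⟨x, hgx, hfx⟩ := ha
    obtain ⟨y, hgy, hfy⟩ := hb
    cases f.2 hfx hfy
    exact g.2 hgx hgy⟩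

/-- The antipode `f†`, with domain `ran f`, sending `f n` back to `n`. -/
def PInj.dag (f : PInj) : PInj :=
  ⟨fun n => if h : ∃ m, f.1 m = some n then some h.choose else none, by
    intro a b c ha hb
    dsimp only at ha hb
    have h1 : ∃ m, f.1 m = some a := by
      by_contra h; rw [dif_neg h] at ha; exact absurd ha (by simp)
    have h2 : ∃ m, f.1 m = some b := by
      by_contra h; rw [dif_neg h] at hb; exact absurd hb (by simp)
    rw [dif_pos h1] at ha
    rw [dif_pos h2] at hb
    have e1 : f.1 c = some a := (Option.some_inj.mp ha) ▸ h1.choose_spec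
    have e2 : f.1 c = some b := (Option.some_inj.mp hb) ▸ h2.choose_spec
    exact Option.some_inj.mp (e1.symm.trans e2)⟩

/-- The partial identity `P_A` on a subset `A ⊆ ℕ`. -/
def PInj.pid (A : Set ℕ) : PInj :=
  ⟨fun n => if n ∈ A then some n else none, by
    intro a b c ha hb
    dsimp only at ha hb
    by_cases h1 : a ∈ A
    · by_cases h2 : b ∈ A
      · rw [if_pos h1] at ha; rw [if_pos h2] at hb
        exact (Option.some_inj.mp ha).trans (Option.some_inj.mp hb).symm
      · rw [if_neg h2] at hb; exact absurd hb (by simp)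
    · rw [if_neg h1] at ha; exact absurd ha (by simp)⟩

/-- Domain of a partial injection. -/
def PInj.dom (f : PInj) : Set ℕ := {n | ∃ m, f.1 n = some m}

/-- Range of a partial injection. -/
def PInj.ran (f : PInj) : Set ℕ := {n | ∃ m, f.1 m = some n}

/-- The action of a partial injection on sequences:
`(f_* α)_n = α_{f†(n)}` if `n ∈ ran f`, and `0` otherwise. -/
def fStar (f : PInj) (α : ℕ → ℂ) : ℕ → ℂ :=
  fun n => if h : ∃ m, f.1 m = some n then α h.choose else 0

/-- `ℓ²(ℕ, ℂ)`. -/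
abbrev H2 : Type := lp (fun _ : ℕ => ℂ) 2

/-- The shift operator `U_f` on `ℓ²(ℕ, ℂ)`. -/
def Uop (f : PInj) (ξ : H2) : H2 :=
  if h : (fun m => if hm : ∃ n, f.1 n = some m then ξ.1 hm.choose else 0) ∈
      lp (fun _ : ℕ => ℂ) 2 then ⟨_, h⟩ else 0

/-- The diagonal operator `diag(α)` on `ℓ²(ℕ, ℂ)`. -/
def diagOp (α : ℕ → ℂ) (ξ : H2) : H2 :=
  if h : (fun n => α n * ξ.1 n) ∈ lp (fun _ : ℕ => ℂ) 2 then ⟨_, h⟩ else 0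

/-- A sequence is bounded (belongs to `ℓ^∞`). -/
def Bdd (α : ℕ → ℂ) : Prop := ∃ C, ∀ n, ‖α n‖ ≤ C

/-- The algebra `Γ^∞ ⊆ B(ℓ²)`: the span of the operators `diag(α) U_f` with
`α ∈ ℓ^∞` and `f` a partial injection. -/
def GamInf : Set (H2 → H2) :=
  {T | ∃ (n : ℕ) (α : Fin n → (ℕ → ℂ)) (f : Fin n → PInj),
    (∀ t, Bdd (α t)) ∧ T = ∑ t, (diagOp (α t)) ∘ (Uop (f t))}

/-!
Write `ν = α / |α|` for the phase of `α` and `T = diag(α) U_f`. Since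
`U_{f†} diag(α) U_f = diag(f†_* α)`, one gets `T* T = diag(|f†_* α|²)`,
`T = (diag(ν) U_f) |T|` and `|T| = (diag(ν) U_f)* T`. Both `diag(ν) U_f` and its adjoint
lie in `Γ^∞`, so a two-sided ideal of `Γ^∞` contains `T` iff it contains `|T|`.
-/

namespace PInj

theorem dag_eq_some_iff (f : PInj) {m n : ℕ} : f.dag.1 n = some m ↔ f.1 m = some n := by
  constructor
  · intro h
    by_cases hex : ∃ k, f.1 k = some n
    · simp only [PInj.dag, dif_pos hex, Option.some_inj] at h
      exact h ▸ hex.choose_spec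
    · simp [PInj.dag, dif_neg hex] at h
  · intro h
    have hex : ∃ k, f.1 k = some n := ⟨m, h⟩
    simp only [PInj.dag, dif_pos hex, Option.some_inj]
    exact f.2 hex.choose_spec h

end PInj

theorem fStar_apply_of_eq_some (f : PInj) (ξ : ℕ → ℂ) {n m : ℕ} (h : f.1 n = some m) :
    fStar f ξ m = ξ n := by
  have hm : ∃ k, f.1 k = some m := ⟨n, h⟩
  rw [fStar, dif_pos hm, f.2 hm.choose_spec h]

theorem fStar_apply_of_not_mem_ran (f : PInj) (ξ : ℕ → ℂ) {m : ℕ} (h : m ∉ f.ran) :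
    fStar f ξ m = 0 :=
  dif_neg h

theorem fStar_dag_apply_of_eq_some (f : PInj) (ξ : ℕ → ℂ) {n m : ℕ} (h : f.1 n = some m) :
    fStar f.dag ξ n = ξ m :=
  fStar_apply_of_eq_some f.dag ξ (f.dag_eq_some_iff.mpr h)

theorem fStar_dag_apply_of_eq_none (f : PInj) (ξ : ℕ → ℂ) {n : ℕ} (h : f.1 n = none) :
    fStar f.dag ξ n = 0 :=
  fStar_apply_of_not_mem_ran f.dag ξ fun ⟨m, hm⟩ => by simp [f.dag_eq_some_iff.mp hm] at h

theorem fStar_map (f : PInj) (φ : ℂ → ℂ) (hφ : φ 0 = 0) (ξ : ℕ → ℂ) :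
    fStar f (fun n => φ (ξ n)) = fun n => φ (fStar f ξ n) := by
  funext n
  unfold fStar
  split_ifs <;> simp [hφ]

theorem Summable.comp_fStar (f : PInj) {F : ℂ → ℝ} (hF : F 0 = 0) {ξ : ℕ → ℂ}
    (h : Summable fun n => F (ξ n)) : Summable fun m => F (fStar f ξ m) := by
  let graph := {q : ℕ × ℕ // f.1 q.1 = some q.2}
  have fst_inj : Function.Injective fun q : graph => q.1.1 := by
    rintro ⟨⟨n, m⟩, hq⟩ ⟨⟨n', m'⟩, hr⟩ (rfl : n = n')
    cases Option.some_inj.mp (hq.symm.trans hr)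
    rfl
  have snd_inj : Function.Injective fun q : graph => q.1.2 := by
    rintro ⟨⟨n, m⟩, hq⟩ ⟨⟨n', m'⟩, hr⟩ (rfl : m = m')
    cases f.2 hq hr
    rfl
  refine (snd_inj.summable_iff fun m hm => ?_).mp ?_
  · rw [fStar_apply_of_not_mem_ran f ξ fun ⟨n, hn⟩ => hm ⟨⟨(n, m), hn⟩, rfl⟩, hF]
  · exact (h.comp_injective fst_inj).congr fun q =>
      congrArg F (fStar_apply_of_eq_some f ξ q.2).symm

theorem Memℓp.fStar (f : PInj) {p : ENNReal} (hp : 0 < p.toReal) {ξ : ℕ → ℂ}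
    (hξ : Memℓp ξ p) : Memℓp (fStar f ξ) p := by
  rw [memℓp_gen_iff hp] at hξ ⊢
  refine hξ.comp_fStar f (F := fun z => ‖z‖ ^ p.toReal) ?_
  simp [Real.zero_rpow hp.ne']

theorem coe_Uop (f : PInj) (ξ : H2) : ⇑(Uop f ξ) = fStar f ξ := by
  have h : (fun m => if hm : ∃ n, f.1 n = some m then ξ hm.choose else 0) ∈
      lp (fun _ : ℕ => ℂ) 2 := ξ.2.fStar f (by norm_num)
  rw [Uop, dif_pos h]
  rfl

theorem Memℓp.mul_of_bdd {p : ENNReal} {α : ℕ → ℂ} (hα : Bdd α) {ξ : ℕ → ℂ}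
    (hξ : Memℓp ξ p) : Memℓp (fun n => α n * ξ n) p := by
  obtain ⟨C, hC⟩ := hα
  refine (hξ.norm.const_mul C).mono fun n => ?_
  rw [norm_mul]
  exact mul_le_mul_of_nonneg_right (hC n) (norm_nonneg _)

theorem diagOp_apply {α : ℕ → ℂ} (hα : Bdd α) (ξ : H2) (n : ℕ) :
    diagOp α ξ n = α n * ξ n := by
  have h : (fun n => α n * ξ n) ∈ lp (fun _ : ℕ => ℂ) 2 := ξ.2.mul_of_bdd hα
  rw [diagOp, dif_pos h]

theorem diagOp_comp_Uop_apply {α : ℕ → ℂ} (hα : Bdd α) (f : PInj) (ξ : H2) (n : ℕ) :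
    (diagOp α ∘ Uop f) ξ n = α n * fStar f ξ n := by
  rw [Function.comp_apply, diagOp_apply hα, coe_Uop]

theorem Bdd.fStar {α : ℕ → ℂ} (hα : Bdd α) (f : PInj) : Bdd (fStar f α) := by
  obtain ⟨C, hC⟩ := hα
  refine ⟨max C 0, fun n => ?_⟩
  unfold _root_.fStar
  split_ifs
  · exact le_max_of_le_left (hC _)
  · simp

theorem Bdd.mul {α β : ℕ → ℂ} (hα : Bdd α) (hβ : Bdd β) : Bdd fun n => α n * β n := by
  obtain ⟨C, hC⟩ := hα
  obtain ⟨D, hD⟩ := hβ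
  refine ⟨max C 0 * max D 0, fun n => ?_⟩
  rw [norm_mul]
  exact mul_le_mul (le_max_of_le_left (hC n)) (le_max_of_le_left (hD n)) (norm_nonneg _)
    (le_max_right _ _)

theorem Bdd.conj {α : ℕ → ℂ} (hα : Bdd α) : Bdd fun n => starRingEnd ℂ (α n) := by
  obtain ⟨C, hC⟩ := hα
  exact ⟨C, fun n => by simpa using hC n⟩

theorem Bdd.ofReal_norm {α : ℕ → ℂ} (hα : Bdd α) : Bdd fun n => ((‖α n‖ : ℝ) : ℂ) := by
  obtain ⟨C, hC⟩ := hα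
  exact ⟨C, fun n => by simpa using hC n⟩

theorem bdd_div_norm (α : ℕ → ℂ) : Bdd fun n => α n / ‖α n‖ :=
  ⟨1, fun n => by simpa using div_self_le_one ‖α n‖⟩

theorem diagOp_comp_Uop_mem_gamInf {α : ℕ → ℂ} (hα : Bdd α) (f : PInj) :
    diagOp α ∘ Uop f ∈ GamInf :=
  ⟨1, fun _ => α, fun _ => f, fun _ => hα, by rw [Fin.sum_univ_one]⟩

theorem diagOp_fStar_dag_comp_Uop_dag_comp {α β : ℕ → ℂ} (hα : Bdd α) (hβ : Bdd β)
    (f : PInj) :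
    (diagOp (fStar f.dag β) ∘ Uop f.dag) ∘ (diagOp α ∘ Uop f) =
      diagOp (fStar f.dag fun n => β n * α n) := by
  funext ξ
  ext n
  rw [Function.comp_apply, diagOp_comp_Uop_apply (hβ.fStar _),
    diagOp_apply ((hβ.mul hα).fStar _)]
  cases hn : f.1 n with
  | none => simp [fStar_dag_apply_of_eq_none f _ hn]
  | some m =>
    rw [fStar_dag_apply_of_eq_some f _ hn, fStar_dag_apply_of_eq_some f _ hn,
      fStar_dag_apply_of_eq_some f _ hn, diagOp_comp_Uop_apply hα, fStar_apply_of_eq_some f _ hn,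
      mul_assoc]

theorem Complex.div_norm_mul_norm (z : ℂ) : z / ‖z‖ * ‖z‖ = z := by
  rcases eq_or_ne z 0 with rfl | hz
  · simp
  · exact div_mul_cancel₀ z (Complex.ofReal_ne_zero.mpr (norm_ne_zero_iff.mpr hz))

theorem Complex.conj_div_norm_mul_self (z : ℂ) : starRingEnd ℂ (z / ‖z‖) * z = ‖z‖ := by
  rw [map_div₀, Complex.conj_ofReal, div_mul_eq_mul_div, Complex.conj_mul', sq, mul_div_assoc]
  rcases eq_or_ne z 0 with rfl | hz
  · simp
  · rw [div_self (Complex.ofReal_ne_zero.mpr (norm_ne_zero_iff.mpr hz)), mul_one]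

theorem diagOp_comp_Uop_eq_polar {α : ℕ → ℂ} (hα : Bdd α) (f : PInj) :
    diagOp α ∘ Uop f = (diagOp (fun n => α n / ‖α n‖) ∘ Uop f) ∘
      diagOp (fun n => ((‖fStar f.dag α n‖ : ℝ) : ℂ)) := by
  funext ξ
  ext n
  rw [diagOp_comp_Uop_apply hα, Function.comp_apply, diagOp_comp_Uop_apply (bdd_div_norm α)]
  by_cases hn : n ∈ f.ran
  · obtain ⟨m, hm⟩ := hn
    rw [fStar_apply_of_eq_some f _ hm, fStar_apply_of_eq_some f _ hm,
      diagOp_apply (hα.fStar _).ofReal_norm, fStar_dag_apply_of_eq_some f _ hm, ← mul_assoc,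
      Complex.div_norm_mul_norm]
  · simp [fStar_apply_of_not_mem_ran f _ hn]

theorem diagOp_comp_Uop_star_comp_self {α : ℕ → ℂ} (hα : Bdd α) (f : PInj) :
    (diagOp (fStar f.dag fun n => starRingEnd ℂ (α n)) ∘ Uop f.dag) ∘ (diagOp α ∘ Uop f) =
      diagOp (fun n => ((‖fStar f.dag α n‖ ^ 2 : ℝ) : ℂ)) := by
  rw [diagOp_fStar_dag_comp_Uop_dag_comp hα hα.conj]
  simp_rw [Complex.conj_mul']
  rw [fStar_map f.dag (fun z => (‖z‖ : ℂ) ^ 2) (by simp)]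
  push_cast
  rfl

theorem phase_star_comp_diagOp_comp_Uop {α : ℕ → ℂ} (hα : Bdd α) (f : PInj) :
    (diagOp (fStar f.dag fun n => starRingEnd ℂ (α n / ‖α n‖)) ∘ Uop f.dag) ∘
        (diagOp α ∘ Uop f) =
      diagOp (fun n => ((‖fStar f.dag α n‖ : ℝ) : ℂ)) := by
  rw [diagOp_fStar_dag_comp_Uop_dag_comp hα (bdd_div_norm α).conj]
  simp_rw [Complex.conj_div_norm_mul_self]
  rw [fStar_map f.dag (fun z => ((‖z‖ : ℝ) : ℂ)) (by simp)]

theorem stmt10_general (I : Set (H2 → H2))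
    (hmul : ∀ S T, S ∈ GamInf → T ∈ I → S ∘ T ∈ I ∧ T ∘ S ∈ I)
    (α : ℕ → ℂ) (hα : Bdd α) (f : PInj) :
    (((diagOp α ∘ Uop f) ∈ I) ↔
      diagOp (fun n => ((‖fStar (PInj.dag f) α n‖ : ℝ) : ℂ)) ∈ I) ∧
    ((diagOp (fStar (PInj.dag f) (fun n => (starRingEnd ℂ) (α n))) ∘
        Uop (PInj.dag f)) ∘ (diagOp α ∘ Uop f) =
      diagOp (fun n => ((‖fStar (PInj.dag f) α n‖ ^ 2 : ℝ) : ℂ))) ∧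
    (diagOp α ∘ Uop f =
      ((diagOp (fun n => if α n = 0 then 0 else α n / ‖α n‖) ∘ Uop f) ∘
        diagOp (fun n => ((‖fStar (PInj.dag f) α n‖ : ℝ) : ℂ)))) ∧
    (diagOp (fun n => if α n = 0 then 0 else α n / ‖α n‖) ∘ Uop f)
      ∈ GamInf := by
  -- `0 / ‖0‖ = 0` already, so the case split in the phase is vacuous
  have phase_eq : (fun n => if α n = 0 then 0 else α n / ‖α n‖) = fun n => α n / ‖α n‖ :=
    funext fun n => by split_ifs with h <;> simp [h]
  have polar := diagOp_comp_Uop_eq_polar hα f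
  have phase_mem := diagOp_comp_Uop_mem_gamInf (bdd_div_norm α) f
  rw [phase_eq]
  refine ⟨⟨fun hT => ?_, fun hT => polar ▸ (hmul _ _ phase_mem hT).1⟩,
    diagOp_comp_Uop_star_comp_self hα f, polar, phase_mem⟩
  rw [← phase_star_comp_diagOp_comp_Uop hα f]
  exact (hmul _ _ (diagOp_comp_Uop_mem_gamInf ((bdd_div_norm α).conj.fStar _) _) hT).1

/-- Let `I` be a two-sided *-ideal of `Γ^∞` and `T = diag(α) U_f`
with `α` bounded. Then `T ∈ I ↔ |T| ∈ I`, where `|T| = diag(|f†_*(α)|)`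
(indeed `T* T = diag(|f†_*(α)|²)`), and the polar decomposition `T = V |T|`
has `V = diag(ν_α) U_f ∈ Γ^∞`, `ν_α(n) = α(n)/|α(n)|` if `α(n) ≠ 0`, else `0`. -/
theorem stmt10 (I : Set (H2 → H2))
    (hsub : I ⊆ GamInf)
    (hadd : ∀ S T, S ∈ I → T ∈ I → S + T ∈ I)
    (hmul : ∀ S T, S ∈ GamInf → T ∈ I → S ∘ T ∈ I ∧ T ∘ S ∈ I)
    (hstar : ∀ (α : ℕ → ℂ) (f : PInj), Bdd α →
      (diagOp α ∘ Uop f) ∈ I →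
      (diagOp (fStar (PInj.dag f) (fun n => (starRingEnd ℂ) (α n))) ∘
        Uop (PInj.dag f)) ∈ I)
    (α : ℕ → ℂ) (hα : Bdd α) (f : PInj) :
    (((diagOp α ∘ Uop f) ∈ I) ↔
      diagOp (fun n => ((‖fStar (PInj.dag f) α n‖ : ℝ) : ℂ)) ∈ I) ∧
    ((diagOp (fStar (PInj.dag f) (fun n => (starRingEnd ℂ) (α n))) ∘
        Uop (PInj.dag f)) ∘ (diagOp α ∘ Uop f) =
      diagOp (fun n => ((‖fStar (PInj.dag f) α n‖ ^ 2 : ℝ) : ℂ))) ∧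
    (diagOp α ∘ Uop f =
      ((diagOp (fun n => if α n = 0 then 0 else α n / ‖α n‖) ∘ Uop f) ∘
        diagOp (fun n => ((‖fStar (PInj.dag f) α n‖ : ℝ) : ℂ)))) ∧
    (diagOp (fun n => if α n = 0 then 0 else α n / ‖α n‖) ∘ Uop f)
      ∈ GamInf :=
  stmt10_general I hmul α hα f
end
end

section
/- The natural map from the quotient of the monoid ring ℤ[2^ℕ] by the ideal I generated by {χ_{A⊔B} − χ_A − χ_B : A, B ⊆ ℕ disjoint} onto the subring 𝒫 = span{diag(χ_A) : A ⊆ ℕ} of ℓ^∞-diagonal matrices is a ring isomorphism; i.e., ℤ[2^ℕ]/I ≅ 𝒫. -/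
/-- The monoid `2^ℕ` of subsets of `ℕ` under intersection. -/
def SetMon : Type := Set ℕ

instance : CommMonoid SetMon where
  mul A B := (Set.inter (A : Set ℕ) (B : Set ℕ) : Set ℕ)
  one := (Set.univ : Set ℕ)
  mul_assoc a b c := Set.inter_assoc a b c
  one_mul a := Set.univ_inter a
  mul_one a := Set.inter_univ a
  mul_comm a b := Set.inter_comm a b

/-- The basis element `χ_A` of the monoid ring `ℤ[2^ℕ]`. -/
noncomputable def chi (A : Set ℕ) : MonoidAlgebra ℤ SetMon :=
  MonoidAlgebra.single (A : SetMon) 1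

/-- The generators `χ_{A⊔B} - χ_A - χ_B` (for `A, B` disjoint) of the ideal `I`. -/
def IGens : Set (MonoidAlgebra ℤ SetMon) :=
  {x | ∃ A B : Set ℕ, Disjoint A B ∧
    x = chi (A ∪ B) - chi A - chi B}

/-- The subring `𝒫` of `ℤ^ℕ` generated by the characteristic functions. -/
def PRing : Subring (ℕ → ℤ) :=
  Subring.closure {f | ∃ A : Set ℕ, f = A.indicator (fun _ => (1 : ℤ))}

/-! Sending `χ_A` to the indicator of `A` gives a ring map `ℤ[2^ℕ] → ℤ^ℕ` whose image is `𝒫` and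
which kills `I`. Conversely, let `x = ∑_{A ∈ s} c_A χ_A` map to `0`. The sets in `s` cut `ℕ` into
the atoms of the Boolean algebra they generate, and modulo `I` each `χ_A` is the sum of the `χ`
of the atoms inside `A`. So `x ≡ ∑_σ (∑_{A ∈ σ} c_A) χ_{cell σ}` modulo `I`, and evaluating the
image of `x` at a point of a nonempty cell shows that its coefficient vanishes. -/

open Finset

section Cells

variable {α : Type*}

/-- The atom of the Boolean algebra generated by `s` on which exactly the members of `σ` hold. -/
def cell (s σ : Finset (Set α)) : Set α := {x | ∀ A ∈ s, x ∈ A ↔ A ∈ σ}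

@[simp]
lemma mem_cell {s σ : Finset (Set α)} {x : α} : x ∈ cell s σ ↔ ∀ A ∈ s, x ∈ A ↔ A ∈ σ :=
  Iff.rfl

lemma pairwiseDisjoint_cell (s : Finset (Set α)) :
    (s.powerset : Set (Finset (Set α))).PairwiseDisjoint (cell s) := by
  intro σ hσ τ hτ hne
  simp only [coe_powerset, Set.mem_preimage, Set.mem_powerset_iff, coe_subset] at hσ hτ
  refine Set.disjoint_left.2 fun x hxσ hxτ => hne (Finset.ext fun A => ?_)
  exact ⟨fun hA => (hxτ A (hσ hA)).1 ((hxσ A (hσ hA)).2 hA),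
    fun hA => (hxσ A (hτ hA)).1 ((hxτ A (hτ hA)).2 hA)⟩

lemma biUnion_cell_eq {s : Finset (Set α)} {A : Set α} (hA : A ∈ s) :
    ⋃ σ ∈ s.powerset.filter (A ∈ ·), cell s σ = A := by
  classical
  ext x
  simp only [Set.mem_iUnion, mem_filter, mem_powerset, exists_prop, mem_cell]
  constructor
  · rintro ⟨σ, ⟨-, hAσ⟩, hx⟩
    exact (hx A hA).2 hAσ
  · intro hx
    exact ⟨s.filter (x ∈ ·), ⟨filter_subset _ _, mem_filter.2 ⟨hA, hx⟩⟩,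
      fun B hB => by simp [hB]⟩

lemma sum_mul_indicator_of_mem_cell {R : Type*} [NonAssocSemiring R] {s σ : Finset (Set α)}
    (hσ : σ ⊆ s) {x : α} (hx : x ∈ cell s σ) (c : Set α → R) :
    ∑ A ∈ s, c A * A.indicator (fun _ => 1) x = ∑ A ∈ σ, c A := by
  classical
  calc ∑ A ∈ s, c A * A.indicator (fun _ => 1) x = ∑ A ∈ s, if A ∈ σ then c A else 0 :=
        sum_congr rfl fun A hA => by simp only [Set.indicator_apply, hx A hA, mul_ite, mul_one,
          mul_zero]
    _ = ∑ A ∈ σ, c A := by rw [sum_ite_mem, inter_eq_right.2 hσ]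

lemma map_biUnion_of_map_union {M : Type*} [AddCommMonoid M] {f : Set α → M}
    (h_empty : f ∅ = 0) (h_union : ∀ A B, Disjoint A B → f (A ∪ B) = f A + f B)
    {ι : Type*} {s : Finset ι} {g : ι → Set α} (hg : (s : Set ι).PairwiseDisjoint g) :
    f (⋃ i ∈ s, g i) = ∑ i ∈ s, f (g i) := by
  classical
  induction s using Finset.induction_on with
  | empty => simp [h_empty]
  | insert a s ha ih =>
    rw [coe_insert, Set.pairwiseDisjoint_insert_of_notMem (mem_coe.not.2 ha)] at hg
    rw [set_biUnion_insert, sum_insert ha, h_union (g a) (⋃ i ∈ s, g i)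
      (Set.disjoint_iUnion₂_right.2 fun i hi => hg.2 i (mem_coe.2 hi)),
      ih hg.1]

lemma sum_smul_eq_sum_cell {R M : Type*} [Semiring R] [AddCommMonoid M] [Module R M]
    {f : Set α → M} (h_empty : f ∅ = 0)
    (h_union : ∀ A B, Disjoint A B → f (A ∪ B) = f A + f B) (s : Finset (Set α))
    (c : Set α → R) :
    ∑ A ∈ s, c A • f A = ∑ σ ∈ s.powerset, (∑ A ∈ σ, c A) • f (cell s σ) := by
  classical
  calc ∑ A ∈ s, c A • f A
      = ∑ A ∈ s, ∑ σ ∈ s.powerset.filter (A ∈ ·), c A • f (cell s σ) := by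
        refine sum_congr rfl fun A hA => ?_
        rw [← smul_sum, ← map_biUnion_of_map_union h_empty h_union
          ((pairwiseDisjoint_cell s).subset (coe_subset.2 (filter_subset _ _))), biUnion_cell_eq hA]
    _ = ∑ σ ∈ s.powerset, ∑ A ∈ σ, c A • f (cell s σ) :=
        sum_comm' fun A σ => by
          simp only [mem_filter, mem_powerset]
          exact ⟨fun ⟨hA, hσ, hAσ⟩ => ⟨hAσ, hσ⟩, fun ⟨hAσ, hσ⟩ => ⟨hσ hAσ, hσ, hAσ⟩⟩
    _ = ∑ σ ∈ s.powerset, (∑ A ∈ σ, c A) • f (cell s σ) := by simp only [sum_smul]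

end Cells

noncomputable def indicatorHom : SetMon →* (ℕ → ℤ) where
  toFun A := (A : Set ℕ).indicator fun _ => 1
  map_one' := Set.indicator_univ _
  map_mul' _ _ := Set.inter_indicator_one

noncomputable def indicatorRingHom : MonoidAlgebra ℤ SetMon →+* (ℕ → ℤ) :=
  (MonoidAlgebra.lift ℤ (ℕ → ℤ) SetMon indicatorHom).toRingHom

lemma exists_eq_sum_smul_chi (x : MonoidAlgebra ℤ SetMon) :
    ∃ (s : Finset (Set ℕ)) (c : Set ℕ → ℤ), x = ∑ A ∈ s, c A • chi A := by
  refine ⟨x.coeff.support, x.coeff, ?_⟩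
  conv_lhs => rw [← MonoidAlgebra.sum_coeff_single x]
  refine sum_congr rfl fun A _ => ?_
  show _ = x.coeff A • MonoidAlgebra.single A 1
  rw [MonoidAlgebra.smul_single', mul_one]

lemma indicatorRingHom_chi (A : Set ℕ) :
    indicatorRingHom (chi A) = A.indicator fun _ => 1 :=
  (MonoidAlgebra.lift_single indicatorHom (A : SetMon) 1).trans (one_smul ℤ _)

lemma indicatorRingHom_sum_smul_chi (s : Finset (Set ℕ)) (c : Set ℕ → ℤ) (n : ℕ) :
    indicatorRingHom (∑ A ∈ s, c A • chi A) n = ∑ A ∈ s, c A * A.indicator (fun _ => 1) n := by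
  simp only [map_sum, map_zsmul, indicatorRingHom_chi, Finset.sum_apply, Pi.smul_apply,
    smul_eq_mul]

lemma indicator_mem_PRing (A : Set ℕ) : (A.indicator fun _ => 1) ∈ PRing :=
  Subring.subset_closure ⟨A, rfl⟩

lemma range_indicatorRingHom : indicatorRingHom.range = PRing := by
  refine le_antisymm ?_ (Subring.closure_le.2 ?_)
  · rintro _ ⟨x, rfl⟩
    obtain ⟨s, c, rfl⟩ := exists_eq_sum_smul_chi x
    rw [map_sum]
    refine sum_mem fun A _ => ?_
    rw [map_zsmul, indicatorRingHom_chi]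
    exact zsmul_mem (indicator_mem_PRing A) _
  · rintro _ ⟨A, rfl⟩
    exact ⟨chi A, indicatorRingHom_chi A⟩

lemma IGens_subset_ker : IGens ⊆ RingHom.ker indicatorRingHom := by
  rintro _ ⟨A, B, hAB, rfl⟩
  rw [SetLike.mem_coe, RingHom.mem_ker, map_sub, map_sub, indicatorRingHom_chi,
    indicatorRingHom_chi, indicatorRingHom_chi, Set.indicator_union_of_disjoint hAB]
  ext n
  simp

section Quotient

local notation "mk" => Ideal.Quotient.mk (Ideal.span IGens)

lemma mk_chi_empty : mk (chi ∅) = 0 := by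
  have h : chi (∅ ∪ ∅) - chi ∅ - chi ∅ ∈ Ideal.span IGens :=
    Ideal.subset_span ⟨∅, ∅, disjoint_bot_left, rfl⟩
  rw [Set.union_empty, sub_self, zero_sub, neg_mem_iff] at h
  exact Ideal.Quotient.eq_zero_iff_mem.2 h

lemma mk_chi_union {A B : Set ℕ} (h : Disjoint A B) :
    mk (chi (A ∪ B)) = mk (chi A) + mk (chi B) := by
  have hmem : chi (A ∪ B) - chi A - chi B ∈ Ideal.span IGens :=
    Ideal.subset_span ⟨A, B, h, rfl⟩
  rwa [← Ideal.Quotient.eq_zero_iff_mem, map_sub, map_sub, sub_sub, sub_eq_zero] at hmem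

lemma mem_span_IGens_of_indicatorRingHom_eq_zero {x : MonoidAlgebra ℤ SetMon}
    (hx : indicatorRingHom x = 0) : x ∈ Ideal.span IGens := by
  obtain ⟨s, c, rfl⟩ := exists_eq_sum_smul_chi x
  rw [← Ideal.Quotient.eq_zero_iff_mem, map_sum]
  simp only [map_zsmul]
  rw [sum_smul_eq_sum_cell (f := fun A => mk (chi A)) mk_chi_empty (fun _ _ => mk_chi_union)]
  refine sum_eq_zero fun σ hσ => ?_
  obtain h | ⟨n, hn⟩ := (cell s σ).eq_empty_or_nonempty
  · rw [h, mk_chi_empty, smul_zero]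
  · have h := congrFun hx n
    rw [indicatorRingHom_sum_smul_chi, sum_mul_indicator_of_mem_cell (mem_powerset.1 hσ) hn,
      Pi.zero_apply] at h
    rw [h, zero_smul]

end Quotient

lemma ker_indicatorRingHom : RingHom.ker indicatorRingHom = Ideal.span IGens :=
  le_antisymm (fun _ => mem_span_IGens_of_indicatorRingHom_eq_zero)
    (Ideal.span_le.2 IGens_subset_ker)

/-- the natural map `ℤ[2^ℕ]/I → 𝒫`, `χ_A ↦ χ_A`, is a ring
isomorphism. -/
theorem stmt15 :
    ∃ e : (MonoidAlgebra ℤ SetMon ⧸ Ideal.span IGens) ≃+* PRing,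
      ∀ A : Set ℕ,
        ((e (Ideal.Quotient.mk (Ideal.span IGens) (chi A)) : ℕ → ℤ)) =
          A.indicator (fun _ => (1 : ℤ)) :=
  ⟨(Ideal.quotEquivOfEq ker_indicatorRingHom.symm).trans
      (indicatorRingHom.quotientKerEquivRange.trans
        (RingEquiv.subringCongr range_indicatorRingHom)),
    indicatorRingHom_chi⟩
end

section
/- Let ξ = Σ_{j=1}^n λ_j χ_{A_j} be an integer linear combination of characteristic functions of subsets A_j ⊆ ℕ whose pointwise sum is the zero function. Then ξ, viewed in the monoid ring ℤ[2^ℕ], lies in the ideal generated by the elements χ_{A⊔B} − χ_A − χ_B for disjoint A, B ⊆ ℕ. -/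
open Classical

/-!
Modulo the ideal, `A ↦ χ_A` is finitely additive, and every finitely additive `μ`
satisfies `∑ λ_j μ(A_j) = 0` whenever `∑ λ_j 1_{A_j} = 0`.
Split each `A_j` into the atoms of the Boolean algebra generated by `A_1, …, A_n`, i.e. the
fibres of `x ↦ {j | x ∈ A_j}`: then `∑ λ_j μ(A_j) = ∑_s (∑_{j ∈ s} λ_j) μ(atom s)`, and each
coefficient vanishes as soon as the atom `s` contains a point `x`, being the value of
`∑ λ_j 1_{A_j}` at `x`; empty atoms contribute `μ ∅ = 0`.
-/

open Finset Function

section FinitelyAdditive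

variable {α ι M : Type*} [AddCommGroup M] {μ : Set α → M}

theorem map_empty_of_additive (hμ : ∀ s t, Disjoint s t → μ (s ∪ t) = μ s + μ t) :
    μ ∅ = 0 := by
  simpa using hμ ∅ ∅ disjoint_bot_left

theorem map_biUnion_finset_of_additive (hμ : ∀ s t, Disjoint s t → μ (s ∪ t) = μ s + μ t)
    (t : Finset ι) {f : ι → Set α} (hf : (t : Set ι).PairwiseDisjoint f) :
    μ (⋃ i ∈ t, f i) = ∑ i ∈ t, μ (f i) := by
  induction t using Finset.induction_on with
  | empty => simpa using map_empty_of_additive hμ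
  | insert a t ha ih =>
    rw [coe_insert, Set.pairwiseDisjoint_insert] at hf
    have hdisj : Disjoint (f a) (⋃ i ∈ t, f i) :=
      Set.disjoint_iUnion₂_right.2 fun i hi => hf.2 i hi (ne_of_mem_of_not_mem hi ha).symm
    rw [set_biUnion_insert, hμ _ _ hdisj, ih hf.1, sum_insert ha]

variable [Fintype ι]

def atom (A : ι → Set α) (s : Finset ι) : Set α :=
  {x | univ.filter (x ∈ A ·) = s}

theorem pairwise_disjoint_atom (A : ι → Set α) : Pairwise (Disjoint on atom A) :=
  fun _ _ hst => Set.disjoint_left.2 fun _ hs ht => hst (hs.symm.trans ht)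

theorem biUnion_atom_eq (A : ι → Set α) (j : ι) :
    ⋃ s ∈ univ.filter (j ∈ ·), atom A s = A j := by
  ext x
  simp [atom]

theorem sum_smul_map_eq_zero_of_additive {R : Type*} [Semiring R] [Module R M]
    (hμ : ∀ s t, Disjoint s t → μ (s ∪ t) = μ s + μ t) (A : ι → Set α) (l : ι → R)
    (hzero : ∀ x, ∑ j, (if x ∈ A j then l j else 0) = 0) :
    ∑ j, l j • μ (A j) = 0 := by
  have hA : ∀ j, μ (A j) = ∑ s ∈ univ.filter (j ∈ ·), μ (atom A s) := fun j => by
    rw [← map_biUnion_finset_of_additive hμ _ ((pairwise_disjoint_atom A).set_pairwise _),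
      biUnion_atom_eq]
  calc ∑ j, l j • μ (A j)
      = ∑ j, ∑ s ∈ univ.filter (j ∈ ·), l j • μ (atom A s) := by simp only [hA, smul_sum]
    _ = ∑ s, ∑ j ∈ s, l j • μ (atom A s) := sum_comm' fun j s => by simp
    _ = ∑ s, (∑ j ∈ s, l j) • μ (atom A s) := by simp only [sum_smul]
    _ = 0 := sum_eq_zero fun s _ => by
      rcases (atom A s).eq_empty_or_nonempty with hs | ⟨x, rfl⟩
      · rw [hs, map_empty_of_additive hμ, smul_zero]
      · rw [sum_filter, hzero x, zero_smul]

end FinitelyAdditive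

/-- if an integer combination `ξ = Σ λ_j χ_{A_j}` has zero
pointwise evaluation (`Σ_{j : x ∈ A_j} λ_j = 0` for all `x`), then `ξ` lies in
the ideal of `ℤ[2^ℕ]` generated by the elements `χ_{A⊔B} - χ_A - χ_B` with
`A, B` disjoint. -/
theorem stmt16 (n : ℕ) (A : Fin n → Set ℕ) (l : Fin n → ℤ)
    (hzero : ∀ x : ℕ, (∑ j, if x ∈ A j then l j else 0) = 0) :
    (∑ j, MonoidAlgebra.single ((A j : Set ℕ) : SetMon) (l j)) ∈
      Ideal.span IGens := by
  suffices h : ∑ j, l j • chi (A j) ∈ Ideal.span IGens by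
    have hsingle : ∀ j, l j • chi (A j) = MonoidAlgebra.single (M := SetMon) (A j) (l j) :=
      fun j => (MonoidAlgebra.smul_single' _ _ _).trans (congrArg _ (mul_one _))
    simp only [hsingle] at h
    -- the goal's `single` is typed over `Set ℕ`, only definitionally equal to `SetMon`
    exact h
  set π := Ideal.Quotient.mk (Ideal.span IGens)
  have hadd : ∀ s t, Disjoint s t → π (chi (s ∪ t)) = π (chi s) + π (chi t) :=
    fun s t hst => by
      rw [← map_add, Ideal.Quotient.eq, ← sub_sub]
      exact Ideal.subset_span ⟨s, t, hst, rfl⟩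
  rw [← Ideal.Quotient.eq_zero_iff_mem, map_sum]
  simpa only [map_zsmul] using sum_smul_map_eq_zero_of_additive (μ := fun s => π (chi s)) hadd A l hzero
end
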